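/- arXiv:2512.20434 — 2 statements merged into one kernel-verified Lean document; each statement's English description precedes it below -/
import Mathlib

section
/- (Frobenius reciprocity, explicit form.) Let G be a finite group, φ : G → ℤ/2 a surjective group homomorphism with kernel G₀, a ∈ G ∖ G₀, ρ : G₀ → GL(n, ℂ) a group homomorphism with induced magnetic representation ρ̃ of (G, φ) on ℂ^{2n}, and let η be a magnetic representation of (G, φ) on ℂᵐ. Then the map sending an m×2n complex matrix T to the m×n matrix T·ι, where ι : ℂⁿ → ℂ^{2n} is the inclusion of the first block (v ↦ (v, 0)), restricts to a bijection from the set of morphisms of magnetic representations from ρ̃ to η onto the set of m×n complex matrices S satisfying S · ρ(g) = η(g) · S for all g ∈ G₀. -/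
open Matrix

noncomputable section

/-- Entrywise complex conjugation of a complex matrix. -/
def conjMat {m n : ℕ} (M : Matrix (Fin m) (Fin n) ℂ) : Matrix (Fin m) (Fin n) ℂ :=
  M.map (starRingEnd ℂ)

/-- Entrywise complex conjugation of a vector in `ℂⁿ`. -/
def conjVec {n : ℕ} (v : Fin n → ℂ) : Fin n → ℂ :=
  fun i => starRingEnd ℂ (v i)

/-- `σ^ε` on matrices, for `ε : ℤ/2` (written multiplicatively). -/
def sigmaPow {m n : ℕ} (ε : Multiplicative (ZMod 2)) (M : Matrix (Fin m) (Fin n) ℂ) :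
    Matrix (Fin m) (Fin n) ℂ :=
  if ε = 1 then M else conjMat M

/-- `σ^ε` on vectors. -/
def sigmaPowVec {n : ℕ} (ε : Multiplicative (ZMod 2)) (v : Fin n → ℂ) : Fin n → ℂ :=
  if ε = 1 then v else conjVec v

/-- A magnetic representation of the magnetic group `(G, φ)` on `ℂⁿ`:
`ρ (g * h) = ρ g * σ^(φ g) (ρ h)`. -/
def IsMagneticRep {G : Type*} [Group G] (φ : G →* Multiplicative (ZMod 2)) {n : ℕ}
    (ρ : G → Matrix.GeneralLinearGroup (Fin n) ℂ) : Prop :=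
  ∀ g h : G, (ρ (g * h) : Matrix (Fin n) (Fin n) ℂ) =
    (ρ g : Matrix (Fin n) (Fin n) ℂ) * sigmaPow (φ g) (ρ h : Matrix (Fin n) (Fin n) ℂ)

/-- A morphism of magnetic representations from `ρ₁` to `ρ₂`. -/
def IsMagMorphism {G : Type*} [Group G] (φ : G →* Multiplicative (ZMod 2)) {n m : ℕ}
    (ρ₁ : G → Matrix.GeneralLinearGroup (Fin n) ℂ)
    (ρ₂ : G → Matrix.GeneralLinearGroup (Fin m) ℂ)
    (T : Matrix (Fin m) (Fin n) ℂ) : Prop :=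
  ∀ g : G, T * (ρ₁ g : Matrix (Fin n) (Fin n) ℂ) =
    (ρ₂ g : Matrix (Fin m) (Fin m) ℂ) * sigmaPow (φ g) T

/-- A `ℂ`-subspace invariant under a magnetic representation. -/
def MagInvariant {G : Type*} [Group G] (φ : G →* Multiplicative (ZMod 2)) {n : ℕ}
    (ρ : G → Matrix.GeneralLinearGroup (Fin n) ℂ) (W : Submodule ℂ (Fin n → ℂ)) : Prop :=
  ∀ g : G, ∀ w ∈ W, (ρ g : Matrix (Fin n) (Fin n) ℂ).mulVec (sigmaPowVec (φ g) w) ∈ W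

/-- An irreducible magnetic representation. -/
def IsIrredMagRep {G : Type*} [Group G] (φ : G →* Multiplicative (ZMod 2)) {n : ℕ}
    (ρ : G → Matrix.GeneralLinearGroup (Fin n) ℂ) : Prop :=
  (⊥ : Submodule ℂ (Fin n → ℂ)) ≠ ⊤ ∧
    ∀ W : Submodule ℂ (Fin n → ℂ), MagInvariant φ ρ W → W = ⊥ ∨ W = ⊤

/-- Irreducibility of a classical (complex linear) representation given by
a family of invertible matrices. -/
def IsClassIrreducible {H : Type*} {n : ℕ}
    (ρ : H → Matrix.GeneralLinearGroup (Fin n) ℂ) : Prop :=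
  (⊥ : Submodule ℂ (Fin n → ℂ)) ≠ ⊤ ∧
    ∀ W : Submodule ℂ (Fin n → ℂ),
      (∀ h : H, ∀ w ∈ W, (ρ h : Matrix (Fin n) (Fin n) ℂ).mulVec w ∈ W) → W = ⊥ ∨ W = ⊤

theorem sq_mem {G : Type*} [Group G] (φ : G →* Multiplicative (ZMod 2)) (a : G) :
    a * a ∈ φ.ker := by
  have h2 : ∀ x : Multiplicative (ZMod 2), x * x = 1 := by decide
  simp [MonoidHom.mem_ker, _root_.map_mul, h2]

/-- `g ↦ a⁻¹ g a` as a map `G₀ → G₀` for `G₀ = ker φ`. -/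
def kerConj {G : Type*} [Group G] (φ : G →* Multiplicative (ZMod 2)) (a : G) (g : φ.ker) :
    φ.ker :=
  ⟨a⁻¹ * g * a, by
    have hg : φ g = 1 := g.2
    simp [MonoidHom.mem_ker, _root_.map_mul, map_inv, hg]⟩

/-- Entrywise conjugation as a map `GL(n, ℂ) → GL(n, ℂ)`. -/
def conjGL {n : ℕ} (A : Matrix.GeneralLinearGroup (Fin n) ℂ) :
    Matrix.GeneralLinearGroup (Fin n) ℂ :=
  Units.map (RingHom.toMonoidHom (RingHom.mapMatrix (starRingEnd ℂ))) A

theorem conjGL_conjGL {n : ℕ} (A : Matrix.GeneralLinearGroup (Fin n) ℂ) :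
    conjGL (conjGL A) = A := by
  apply Units.ext
  ext i j
  simp [conjGL]

theorem conjMat_mul {l m n : ℕ} (M : Matrix (Fin l) (Fin m) ℂ) (N : Matrix (Fin m) (Fin n) ℂ) :
    conjMat (M * N) = conjMat M * conjMat N := by
  ext i j
  simp [conjMat, Matrix.mul_apply, map_sum]

theorem conjMat_add {m n : ℕ} (M N : Matrix (Fin m) (Fin n) ℂ) :
    conjMat (M + N) = conjMat M + conjMat N := by
  ext i j
  simp [conjMat]

theorem sigmaPow_mul {l m n : ℕ} (ε : Multiplicative (ZMod 2))
    (M : Matrix (Fin l) (Fin m) ℂ) (N : Matrix (Fin m) (Fin n) ℂ) :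
    sigmaPow ε (M * N) = sigmaPow ε M * sigmaPow ε N := by
  unfold sigmaPow
  split
  · rfl
  · exact conjMat_mul M N

theorem sigmaPow_add {m n : ℕ} (ε : Multiplicative (ZMod 2))
    (M N : Matrix (Fin m) (Fin n) ℂ) :
    sigmaPow ε (M + N) = sigmaPow ε M + sigmaPow ε N := by
  unfold sigmaPow
  split
  · rfl
  · exact conjMat_add M N

/-- The `ℝ`-algebra of endomorphisms of a magnetic representation. -/
def MagEnd {G : Type*} [Group G] (φ : G →* Multiplicative (ZMod 2)) {n : ℕ}
    (ρ : G → Matrix.GeneralLinearGroup (Fin n) ℂ) :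
    Subalgebra ℝ (Matrix (Fin n) (Fin n) ℂ) where
  carrier := {T | ∀ g : G, T * (ρ g : Matrix (Fin n) (Fin n) ℂ) =
      (ρ g : Matrix (Fin n) (Fin n) ℂ) * sigmaPow (φ g) T}
  mul_mem' := by
    intro T S hT hS g
    rw [mul_assoc, hS g, ← mul_assoc, hT g, mul_assoc, sigmaPow_mul]
  add_mem' := by
    intro T S hT hS g
    rw [add_mul, hT g, hS g, sigmaPow_add, mul_add]
  algebraMap_mem' := by
    intro r g
    have hσ : sigmaPow (φ g) (algebraMap ℝ (Matrix (Fin n) (Fin n) ℂ) r) =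
        algebraMap ℝ (Matrix (Fin n) (Fin n) ℂ) r := by
      unfold sigmaPow conjMat
      split
      · rfl
      · ext i j
        simp [Matrix.algebraMap_matrix_apply, apply_ite (starRingEnd ℂ)]
    rw [hσ, Algebra.commutes]

/-- `(n+n) × (n+n)` block matrix built out of four `n × n` blocks. -/
def blocks {n : ℕ} (A B C D : Matrix (Fin n) (Fin n) ℂ) :
    Matrix (Fin (n + n)) (Fin (n + n)) ℂ :=
  Matrix.reindex finSumFinEquiv finSumFinEquiv (Matrix.fromBlocks A B C D)

/-- The matrix of the inclusion `ℂⁿ → ℂ^{n+n}` of the first block. -/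
def iotaMat (n : ℕ) : Matrix (Fin (n + n)) (Fin n) ℂ :=
  Matrix.reindex finSumFinEquiv (Equiv.refl (Fin n))
    (Matrix.fromRows (1 : Matrix (Fin n) (Fin n) ℂ) (0 : Matrix (Fin n) (Fin n) ℂ))


/- ### Auxiliary lemmas -/

theorem conjMat_conjMat {m n : ℕ} (M : Matrix (Fin m) (Fin n) ℂ) :
    conjMat (conjMat M) = M := by
  ext i j; simp [conjMat]

theorem sigmaPow_one' {m n : ℕ} (M : Matrix (Fin m) (Fin n) ℂ) :
    sigmaPow 1 M = M := if_pos rfl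

theorem sigmaPow_of_ne {m n : ℕ} {ε : Multiplicative (ZMod 2)} (h : ε ≠ 1)
    (M : Matrix (Fin m) (Fin n) ℂ) : sigmaPow ε M = conjMat M := if_neg h

theorem sigmaPow_sigmaPow {m n : ℕ} (ε δ : Multiplicative (ZMod 2))
    (M : Matrix (Fin m) (Fin n) ℂ) :
    sigmaPow ε (sigmaPow δ M) = sigmaPow (ε * δ) M := by
  have key : ∀ x y : Multiplicative (ZMod 2), x ≠ 1 → y ≠ 1 → x * y = 1 := by decide
  by_cases hε : ε = 1
  · subst hε; rw [sigmaPow_one', one_mul]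
  · by_cases hδ : δ = 1
    · subst hδ; rw [sigmaPow_one' M, mul_one]
    · rw [sigmaPow_of_ne hδ, sigmaPow_of_ne hε, conjMat_conjMat, key ε δ hε hδ, sigmaPow_one']

/-- The `Sum`-indexed version of a matrix with `n + n` columns. -/
theorem toSum_ofSum {m n : ℕ} (X : Matrix (Fin m) (Fin n ⊕ Fin n) ℂ) :
    (X.submatrix id ⇑(finSumFinEquiv (m := n) (n := n)).symm).submatrix id ⇑finSumFinEquiv
      = X := by
  ext i s; simp

theorem ofSum_toSum {m n : ℕ} (T : Matrix (Fin m) (Fin (n + n)) ℂ) :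
    ((T.submatrix id ⇑(finSumFinEquiv (m := n) (n := n))).submatrix id ⇑finSumFinEquiv.symm)
      = T := by
  ext i j; simp

theorem toSum_inj {m n : ℕ} {T T' : Matrix (Fin m) (Fin (n + n)) ℂ}
    (h : T.submatrix id ⇑(finSumFinEquiv (m := n) (n := n)) =
      T'.submatrix id ⇑finSumFinEquiv) : T = T' := by
  rw [← ofSum_toSum T, ← ofSum_toSum T', h]

theorem mul_blocks_toSum {mm n : ℕ} (T : Matrix (Fin mm) (Fin (n + n)) ℂ)
    (A B C D : Matrix (Fin n) (Fin n) ℂ) :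
    (T * blocks A B C D).submatrix id ⇑(finSumFinEquiv (m := n) (n := n)) =
      T.submatrix id ⇑finSumFinEquiv * Matrix.fromBlocks A B C D := by
  have hb : blocks A B C D =
      (Matrix.fromBlocks A B C D).submatrix ⇑(finSumFinEquiv (m := n) (n := n)).symm
        ⇑finSumFinEquiv.symm := by
    rw [blocks, Matrix.reindex_apply]
  conv_lhs => rw [hb, ← ofSum_toSum T]
  rw [Matrix.submatrix_mul_equiv, toSum_ofSum]

theorem mul_toSum {mm n : ℕ} (M : Matrix (Fin mm) (Fin mm) ℂ)
    (T : Matrix (Fin mm) (Fin (n + n)) ℂ) :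
    (M * T).submatrix id ⇑(finSumFinEquiv (m := n) (n := n)) =
      M * T.submatrix id ⇑finSumFinEquiv := by
  ext i s; simp [Matrix.mul_apply]

theorem conj_toSum {mm n : ℕ} (T : Matrix (Fin mm) (Fin (n + n)) ℂ) :
    (conjMat T).submatrix id ⇑(finSumFinEquiv (m := n) (n := n)) =
      (T.submatrix id ⇑finSumFinEquiv).map (starRingEnd ℂ) := by
  ext i s; simp [conjMat]

theorem map_fromColumns {m' n₁ n₂ : Type*} (f : ℂ → ℂ)
    (A : Matrix m' n₁ ℂ) (B : Matrix m' n₂ ℂ) :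
    (Matrix.fromCols A B).map f = Matrix.fromCols (A.map f) (B.map f) := by
  ext i (j | j) <;> simp [Matrix.fromCols]

theorem map_star_map_star {m' n' : Type*} (A : Matrix m' n' ℂ) :
    (A.map (starRingEnd ℂ)).map (starRingEnd ℂ) = A := by
  ext i j; simp

theorem mul_iota {mm n : ℕ} (T : Matrix (Fin mm) (Fin (n + n)) ℂ) :
    T * iotaMat n = (T.submatrix id ⇑(finSumFinEquiv (m := n) (n := n))).toCols₁ := by
  have hi : iotaMat n =
      (Matrix.fromRows (1 : Matrix (Fin n) (Fin n) ℂ) (0 : Matrix (Fin n) (Fin n) ℂ)).submatrix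
        ⇑(finSumFinEquiv (m := n) (n := n)).symm id := by
    rw [iotaMat, Matrix.reindex_apply]; rfl
  conv_lhs => rw [hi, ← ofSum_toSum T]
  rw [Matrix.submatrix_mul_equiv, Matrix.submatrix_id_id]
  conv_lhs => rw [← Matrix.fromCols_toCols (T.submatrix id ⇑finSumFinEquiv)]
  rw [Matrix.fromCols_mul_fromRows]
  simp

/-- The matrix with `n + n` columns whose two column blocks are `S₁` and `S₂`. -/
def twoCols {m n : ℕ} (S₁ S₂ : Matrix (Fin m) (Fin n) ℂ) : Matrix (Fin m) (Fin (n + n)) ℂ :=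
  (Matrix.fromCols S₁ S₂).submatrix id ⇑(finSumFinEquiv (m := n) (n := n)).symm

theorem toSum_twoCols {m n : ℕ} (S₁ S₂ : Matrix (Fin m) (Fin n) ℂ) :
    (twoCols S₁ S₂).submatrix id ⇑(finSumFinEquiv (m := n) (n := n)) =
      Matrix.fromCols S₁ S₂ :=
  toSum_ofSum _

theorem twoCols_surj {m n : ℕ} (T : Matrix (Fin m) (Fin (n + n)) ℂ) :
    ∃ S₁ S₂ : Matrix (Fin m) (Fin n) ℂ, T = twoCols S₁ S₂ := by
  refine ⟨(T.submatrix id ⇑finSumFinEquiv).toCols₁,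
    (T.submatrix id ⇑finSumFinEquiv).toCols₂, ?_⟩
  rw [twoCols, Matrix.fromCols_toCols, ofSum_toSum]

theorem twoCols_inj {m n : ℕ} {S₁ S₂ S₁' S₂' : Matrix (Fin m) (Fin n) ℂ}
    (h : twoCols S₁ S₂ = twoCols S₁' S₂') : S₁ = S₁' ∧ S₂ = S₂' := by
  have h2 := congrArg
    (fun X : Matrix (Fin m) (Fin (n + n)) ℂ =>
      X.submatrix id ⇑(finSumFinEquiv (m := n) (n := n))) h
  simp only [toSum_twoCols] at h2
  exact (Matrix.fromCols_inj.eq_iff).mp h2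

theorem twoCols_mul_blocks {m n : ℕ} (S₁ S₂ : Matrix (Fin m) (Fin n) ℂ)
    (A B C D : Matrix (Fin n) (Fin n) ℂ) :
    twoCols S₁ S₂ * blocks A B C D = twoCols (S₁ * A + S₂ * C) (S₁ * B + S₂ * D) := by
  apply toSum_inj
  rw [mul_blocks_toSum, toSum_twoCols, toSum_twoCols, Matrix.fromCols_mul_fromBlocks]

theorem mul_twoCols {m n : ℕ} (M : Matrix (Fin m) (Fin m) ℂ)
    (S₁ S₂ : Matrix (Fin m) (Fin n) ℂ) :
    M * twoCols S₁ S₂ = twoCols (M * S₁) (M * S₂) := by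
  apply toSum_inj
  rw [mul_toSum, toSum_twoCols, toSum_twoCols, Matrix.mul_fromCols]

theorem conjMat_twoCols {m n : ℕ} (S₁ S₂ : Matrix (Fin m) (Fin n) ℂ) :
    conjMat (twoCols S₁ S₂) = twoCols (conjMat S₁) (conjMat S₂) := by
  apply toSum_inj
  rw [conj_toSum, toSum_twoCols, toSum_twoCols, map_fromColumns]
  rfl

theorem twoCols_mul_iota {m n : ℕ} (S₁ S₂ : Matrix (Fin m) (Fin n) ℂ) :
    twoCols S₁ S₂ * iotaMat n = S₁ := by
  rw [mul_iota, toSum_twoCols, Matrix.toCols₁_fromCols]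

theorem mag_morph_mul {G : Type*} [Group G] (φ : G →* Multiplicative (ZMod 2)) {nn m : ℕ}
    (ρt : G → Matrix.GeneralLinearGroup (Fin nn) ℂ)
    (η : G → Matrix.GeneralLinearGroup (Fin m) ℂ)
    (hρt : IsMagneticRep φ ρt) (hη : IsMagneticRep φ η)
    (T : Matrix (Fin m) (Fin nn) ℂ) (g h : G)
    (hg : T * (ρt g : Matrix (Fin nn) (Fin nn) ℂ) =
      (η g : Matrix (Fin m) (Fin m) ℂ) * sigmaPow (φ g) T)
    (hh : T * (ρt h : Matrix (Fin nn) (Fin nn) ℂ) =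
      (η h : Matrix (Fin m) (Fin m) ℂ) * sigmaPow (φ h) T) :
    T * (ρt (g * h) : Matrix (Fin nn) (Fin nn) ℂ) =
      (η (g * h) : Matrix (Fin m) (Fin m) ℂ) * sigmaPow (φ (g * h)) T := by
  rw [hρt g h, hη g h, _root_.map_mul φ g h, ← sigmaPow_sigmaPow, ← Matrix.mul_assoc, hg,
    Matrix.mul_assoc, ← sigmaPow_mul, hh, sigmaPow_mul, Matrix.mul_assoc]

theorem stmt6 {G : Type*} [Group G] [Finite G]
    (φ : G →* Multiplicative (ZMod 2)) (hφ : Function.Surjective φ)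
    (a : G) (ha : a ∉ φ.ker) (n m : ℕ)
    (ρ : φ.ker →* Matrix.GeneralLinearGroup (Fin n) ℂ)
    (ρt : G → Matrix.GeneralLinearGroup (Fin (n + n)) ℂ)
    (hρt : IsMagneticRep φ ρt)
    (hρt0 : ∀ g : φ.ker, (ρt g : Matrix (Fin (n + n)) (Fin (n + n)) ℂ) =
      blocks (ρ g : Matrix (Fin n) (Fin n) ℂ) 0 0
        (conjMat (ρ (kerConj φ a g) : Matrix (Fin n) (Fin n) ℂ)))
    (hρta : (ρt a : Matrix (Fin (n + n)) (Fin (n + n)) ℂ) =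
      blocks 0 (ρ ⟨a * a, sq_mem φ a⟩ : Matrix (Fin n) (Fin n) ℂ) 1 0)
    (η : G → Matrix.GeneralLinearGroup (Fin m) ℂ) (hη : IsMagneticRep φ η) :
    Set.BijOn (fun T : Matrix (Fin m) (Fin (n + n)) ℂ => T * iotaMat n)
      {T | IsMagMorphism φ ρt η T}
      {S : Matrix (Fin m) (Fin n) ℂ |
        ∀ g : φ.ker, S * (ρ g : Matrix (Fin n) (Fin n) ℂ) =
          (η g : Matrix (Fin m) (Fin m) ℂ) * S} := by
  classical
  have hgker : ∀ g : φ.ker, φ (g : G) = 1 := fun g => g.2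
  have hane : φ a ≠ 1 := fun h => ha (MonoidHom.mem_ker.mpr h)
  have hηconj : ∀ g : φ.ker,
      (η a : Matrix (Fin m) (Fin m) ℂ) *
        conjMat (η (a⁻¹ * (g : G) * a) : Matrix (Fin m) (Fin m) ℂ) =
      (η (g : G) : Matrix (Fin m) (Fin m) ℂ) * (η a : Matrix (Fin m) (Fin m) ℂ) := by
    intro g
    have h1 := hη a (a⁻¹ * (g : G) * a)
    rw [sigmaPow_of_ne hane] at h1
    have h3 : a * (a⁻¹ * (g : G) * a) = (g : G) * a := by group
    rw [h3, hη (g : G) a, hgker g, sigmaPow_one'] at h1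
    exact h1.symm
  have hηaa : (η (a * a) : Matrix (Fin m) (Fin m) ℂ) =
      (η a : Matrix (Fin m) (Fin m) ℂ) *
        conjMat (η a : Matrix (Fin m) (Fin m) ℂ) := by
    have h1 := hη a a
    rwa [sigmaPow_of_ne hane] at h1
  have key : ∀ S₁ S₂ : Matrix (Fin m) (Fin n) ℂ,
      IsMagMorphism φ ρt η (twoCols S₁ S₂) ↔
        ((∀ g : φ.ker, S₁ * (ρ g : Matrix (Fin n) (Fin n) ℂ) =
            (η (g : G) : Matrix (Fin m) (Fin m) ℂ) * S₁) ∧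
          S₂ = (η a : Matrix (Fin m) (Fin m) ℂ) * conjMat S₁) := by
    intro S₁ S₂
    constructor
    · intro hT
      have hA := hT a
      rw [hρta, sigmaPow_of_ne hane, conjMat_twoCols, twoCols_mul_blocks, mul_twoCols] at hA
      simp only [Matrix.mul_zero, Matrix.mul_one, zero_add, add_zero] at hA
      have hA2 := (twoCols_inj hA).1
      refine ⟨?_, hA2⟩
      intro g
      have hB := hT (g : G)
      rw [hρt0 g, hgker g, sigmaPow_one', twoCols_mul_blocks, mul_twoCols] at hB
      simp only [Matrix.mul_zero, zero_add, add_zero] at hB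
      exact (twoCols_inj hB).1
    · rintro ⟨h1, h2⟩
      have mcker : ∀ g : φ.ker,
          twoCols S₁ S₂ * (ρt (g : G) : Matrix (Fin (n + n)) (Fin (n + n)) ℂ) =
            (η (g : G) : Matrix (Fin m) (Fin m) ℂ) *
              sigmaPow (φ (g : G)) (twoCols S₁ S₂) := by
        intro g
        rw [hgker g, sigmaPow_one', hρt0 g, twoCols_mul_blocks, mul_twoCols]
        simp only [Matrix.mul_zero, zero_add, add_zero]
        have hc : ((kerConj φ a g : φ.ker) : G) = a⁻¹ * (g : G) * a := rfl
        have hsec : S₂ * conjMat (ρ (kerConj φ a g) : Matrix (Fin n) (Fin n) ℂ) =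
            (η (g : G) : Matrix (Fin m) (Fin m) ℂ) * S₂ := by
          rw [h2, Matrix.mul_assoc, ← conjMat_mul, h1 (kerConj φ a g), conjMat_mul, hc,
            ← Matrix.mul_assoc, hηconj g, Matrix.mul_assoc]
        exact congrArg₂ twoCols (h1 g) hsec
      have mca : twoCols S₁ S₂ * (ρt a : Matrix (Fin (n + n)) (Fin (n + n)) ℂ) =
          (η a : Matrix (Fin m) (Fin m) ℂ) * sigmaPow (φ a) (twoCols S₁ S₂) := by
        rw [hρta, sigmaPow_of_ne hane, conjMat_twoCols, twoCols_mul_blocks, mul_twoCols]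
        simp only [Matrix.mul_zero, Matrix.mul_one, zero_add, add_zero]
        have hc : ((⟨a * a, sq_mem φ a⟩ : φ.ker) : G) = a * a := rfl
        have hsec : S₁ * (ρ ⟨a * a, sq_mem φ a⟩ : Matrix (Fin n) (Fin n) ℂ) =
            (η a : Matrix (Fin m) (Fin m) ℂ) * conjMat S₂ := by
          rw [h2, conjMat_mul, conjMat_conjMat, ← Matrix.mul_assoc, h1 ⟨a * a, sq_mem φ a⟩,
            hc, hηaa]
        exact congrArg₂ twoCols h2 hsec
      intro g
      by_cases hg : g ∈ φ.ker
      · exact mcker ⟨g, hg⟩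
      · have hgne : φ g ≠ 1 := fun h => hg (MonoidHom.mem_ker.mpr h)
        have hxy : ∀ x y : Multiplicative (ZMod 2), x ≠ 1 → y ≠ 1 → x * y⁻¹ = 1 := by decide
        have hga : g * a⁻¹ ∈ φ.ker := by
          rw [MonoidHom.mem_ker, _root_.map_mul, map_inv]
          exact hxy _ _ hgne hane
        have hmul := mag_morph_mul φ ρt η hρt hη (twoCols S₁ S₂) (g * a⁻¹) a
          (mcker ⟨g * a⁻¹, hga⟩) mca
        rwa [inv_mul_cancel_right] at hmul
  refine ⟨?_, ?_, ?_⟩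
  · intro T hT
    obtain ⟨S₁, S₂, rfl⟩ := twoCols_surj T
    simp only [Set.mem_setOf_eq] at hT ⊢
    rw [twoCols_mul_iota]
    exact ((key S₁ S₂).mp hT).1
  · intro T hT T' hT' hEq
    obtain ⟨S₁, S₂, rfl⟩ := twoCols_surj T
    obtain ⟨S₁', S₂', rfl⟩ := twoCols_surj T'
    simp only [Set.mem_setOf_eq] at hT hT'
    have hEq' : twoCols S₁ S₂ * iotaMat n = twoCols S₁' S₂' * iotaMat n := hEq
    rw [twoCols_mul_iota, twoCols_mul_iota] at hEq'
    have h2 := ((key S₁ S₂).mp hT).2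
    have h2' := ((key S₁' S₂').mp hT').2
    rw [hEq', h2, h2', hEq']
  · intro S hS
    simp only [Set.mem_setOf_eq] at hS
    refine ⟨twoCols S ((η a : Matrix (Fin m) (Fin m) ℂ) * conjMat S), ?_, ?_⟩
    · exact (key S _).mpr ⟨hS, rfl⟩
    · exact twoCols_mul_iota S _
end
end

section
/- (Schur's lemma for magnetic groups, first part.) Let (G, φ) be a finite magnetic group, let ρ₁ and ρ₂ be irreducible magnetic representations of (G, φ) on ℂⁿ and ℂᵐ respectively, and let T be a morphism of magnetic representations from ρ₁ to ρ₂. Then either T = 0 or T is invertible (in particular n = m). -/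
open Matrix

noncomputable section

theorem sigmaPow_mulVec {m n : ℕ} (ε : Multiplicative (ZMod 2))
    (M : Matrix (Fin m) (Fin n) ℂ) (v : Fin n → ℂ) :
    (sigmaPow ε M).mulVec (sigmaPowVec ε v) = sigmaPowVec ε (M.mulVec v) := by
  unfold sigmaPow sigmaPowVec
  split
  · rfl
  · ext i
    simp [conjMat, conjVec, Matrix.mulVec, dotProduct, map_sum]

theorem sigmaPowVec_zero {n : ℕ} (ε : Multiplicative (ZMod 2)) :
    sigmaPowVec ε (0 : Fin n → ℂ) = 0 := by
  unfold sigmaPowVec conjVec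
  split <;> (ext i <;> simp)

theorem stmt11 {G : Type*} [Group G] [Finite G]
    (φ : G →* Multiplicative (ZMod 2)) (hφ : Function.Surjective φ) {n m : ℕ}
    (ρ₁ : G → Matrix.GeneralLinearGroup (Fin n) ℂ)
    (ρ₂ : G → Matrix.GeneralLinearGroup (Fin m) ℂ)
    (h₁ : IsMagneticRep φ ρ₁) (h₂ : IsMagneticRep φ ρ₂)
    (hi₁ : IsIrredMagRep φ ρ₁) (hi₂ : IsIrredMagRep φ ρ₂)
    (T : Matrix (Fin m) (Fin n) ℂ) (hT : IsMagMorphism φ ρ₁ ρ₂ T) :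
    T = 0 ∨ ∃ h : n = m,
      IsUnit (Matrix.reindex (Equiv.refl (Fin m)) (finCongr h) T) := by
  classical
  set L := Matrix.mulVecLin T with hL
  -- kernel of T is invariant under ρ₁
  have hker : MagInvariant φ ρ₁ (LinearMap.ker L) := by
    intro g w hw
    simp only [LinearMap.mem_ker, hL, Matrix.mulVecLin_apply] at hw ⊢
    rw [Matrix.mulVec_mulVec, hT g, ← Matrix.mulVec_mulVec, sigmaPow_mulVec, hw,
      sigmaPowVec_zero, Matrix.mulVec_zero]
  -- range of T is invariant under ρ₂
  have hran : MagInvariant φ ρ₂ (LinearMap.range L) := by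
    rintro g w ⟨v, rfl⟩
    simp only [hL, Matrix.mulVecLin_apply]
    refine ⟨(ρ₁ g : Matrix (Fin n) (Fin n) ℂ).mulVec (sigmaPowVec (φ g) v), ?_⟩
    simp only [Matrix.mulVecLin_apply]
    rw [Matrix.mulVec_mulVec, hT g, ← Matrix.mulVec_mulVec, ← sigmaPow_mulVec,
      Matrix.mulVec_mulVec]
  rcases hi₁.2 _ hker with hk | hk
  · -- kernel trivial: T injective
    rcases hi₂.2 _ hran with hr | hr
    · -- range trivial: T = 0
      left
      ext i j
      have : L (Pi.single j 1) = 0 := by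
        have : L (Pi.single j 1) ∈ LinearMap.range L := ⟨_, rfl⟩
        rw [hr] at this
        simpa using this
      have := congrFun this i
      simpa [hL, Matrix.mulVec_single] using this
    · -- range full: T bijective
      right
      have hinj : Function.Injective L := by
        rw [← LinearMap.ker_eq_bot]; exact hk
      have hsurj : Function.Surjective L := by
        rw [← LinearMap.range_eq_top]; exact hr
      have e : (Fin n → ℂ) ≃ₗ[ℂ] (Fin m → ℂ) :=
        LinearEquiv.ofBijective L ⟨hinj, hsurj⟩
      have hnm : n = m := by
        have := e.finrank_eq
        simpa using this
      refine ⟨hnm, ?_⟩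
      subst hnm
      have hTT : (Matrix.reindex (Equiv.refl (Fin n)) (finCongr rfl) T) = T := by
        ext i j; rfl
      rw [hTT, Matrix.isUnit_iff_isUnit_det, isUnit_iff_ne_zero]
      intro hdet
      obtain ⟨v, hv, hv0⟩ := (Matrix.exists_mulVec_eq_zero_iff).2 hdet
      exact hv (hinj (by simpa [hL, Matrix.mulVecLin_apply] using hv0))
  · -- kernel full: T = 0
    left
    ext i j
    have : L (Pi.single j 1) = 0 := by
      have : Pi.single j 1 ∈ LinearMap.ker L := by rw [hk]; trivial
      simpa using this
    have := congrFun this i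
    simpa [hL, Matrix.mulVec_single] using this
end
end
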